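/- Consider the CTRS R over constants a, b and unary symbols f, g, with rules a → b, f(a) → b, and (g(x) → g(a) ⇐ f(x) → x) under the reachability semantics. Then the condition f(x) →* x is infeasible: there is no term t such that f(t) →*_R t. -/

import Mathlib

/-! From `f(s)` the only reachable terms are `f(s')` with `s →* s'`, and `b` once `s →* a`:
the only rule applicable at an `f`-root is `f(a) → b`, and `b` is a normal form.
So `f(t) →* t` forces `t = f(t')` with `f(t') →* t'`, which is impossible by induction on `t`,
except for `t = b`, which would need the normal form `b` to reach `a`. -/

/-- Terms over the signature with constants `a`, `b` and unary symbols `f`, `g`. -/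
inductive Tm where
  | a | b
  | f (t : Tm)
  | g (t : Tm)

mutual
  /-- The one-step rewrite relation of the CTRS with rules `a → b`, `f(a) → b` and
  `g(x) → g(a) ⇐ f(x) → x` under the reachability semantics: rule instances
  (whose conditions hold w.r.t. `Rews`) closed under contexts. -/
  inductive Rew : Tm → Tm → Prop where
    | rule1 : Rew .a .b
    | rule2 : Rew (.f .a) .b
    | rule3 (x : Tm) : Rews (.f x) x → Rew (.g x) (.g .a)
    | f_congr {t t'} : Rew t t' → Rew (.f t) (.f t')
    | g_congr {t t'} : Rew t t' → Rew (.g t) (.g t')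

  /-- The many-step rewrite relation: reflexive and closed under prepending
  one-step rewrites. -/
  inductive Rews : Tm → Tm → Prop where
    | refl (t : Tm) : Rews t t
    | step {s u t : Tm} : Rew s u → Rews u t → Rews s t
end

theorem Rews.eq_b_of_b {u : Tm} : Rews .b u → u = .b
  | .refl _ => rfl
  | .step h _ => nomatch h

theorem Rews.f_cases {s u : Tm} (h : Rews (.f s) u) :
    (∃ s', Rews s s' ∧ u = .f s') ∨ (u = .b ∧ Rews s .a) :=
  go h rfl
where
  go : ∀ {v u : Tm}, Rews v u → ∀ {s}, v = .f s →
      (∃ s', Rews s s' ∧ u = .f s') ∨ (u = .b ∧ Rews s .a)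
    | _, _, .refl _, s, rfl => .inl ⟨s, .refl s, rfl⟩
    | _, _, .step .rule2 hb, _, rfl => .inr ⟨hb.eq_b_of_b, .refl _⟩
    | _, _, .step (.f_congr h) hu, _, rfl =>
      match go hu rfl with
      | .inl ⟨s', hs', hu'⟩ => .inl ⟨s', .step h hs', hu'⟩
      | .inr ⟨hu', ha⟩ => .inr ⟨hu', .step h ha⟩

/-- The condition `f(x) →* x` (of the conditional dependency pair
`G(x) → G(a) ⇐ f(x) → x`) is infeasible: no term `t` satisfies `f(t) →*_R t`. -/
theorem condition_infeasible : ¬ ∃ t : Tm, Rews (.f t) t := by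
  rintro ⟨t, h⟩
  induction t with
  | b =>
    obtain ⟨_, _, ⟨⟩⟩ | ⟨-, hba⟩ := h.f_cases
    nomatch hba.eq_b_of_b
  | f t ih =>
    obtain ⟨_, ht, ⟨⟩⟩ | ⟨⟨⟩, -⟩ := h.f_cases
    exact ih ht
  | a | g => obtain ⟨_, _, ⟨⟩⟩ | ⟨⟨⟩, -⟩ := h.f_cases
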